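/- For fixed z ∈ ℝ^d and α > 1, the function τ ↦ Σ_i [(α-1)z_i - τ]_+^{1/(α-1)} is continuous, nonincreasing, tends to +∞ as τ → -∞ (for d ≥ 1) and equals 0 for τ ≥ (α-1) max_i z_i; hence there exists a τ(z) with Σ_i [(α-1)z_i - τ(z)]_+^{1/(α-1)} = 1, and this τ(z) is unique on the region where the sum is positive. -/
import Mathlib


noncomputable def areluSum {d : ℕ} (α : ℝ) (z : Fin d → ℝ) (τ : ℝ) : ℝ :=
  ∑ i, (max ((α - 1) * z i - τ) 0) ^ (1 / (α - 1))

/-- For fixed z and α > 1, the map τ ↦ Σ_i [(α-1)z_i - τ]_+^{1/(α-1)} is continuous,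
nonincreasing, tends to +∞ as τ → -∞, vanishes for τ ≥ (α-1) max_i z_i; hence a threshold
τ(z) with sum equal to 1 exists and is unique. -/
theorem stmt15 {d : ℕ} (hd : 0 < d) (α : ℝ) (hα : 1 < α) (z : Fin d → ℝ) :
    Continuous (areluSum α z) ∧
    Antitone (areluSum α z) ∧
    Filter.Tendsto (areluSum α z) Filter.atBot Filter.atTop ∧
    (∀ τ : ℝ,
      (α - 1) * Finset.univ.sup' (Finset.univ_nonempty_iff.mpr
        (Fin.pos_iff_nonempty.mp hd)) z ≤ τ → areluSum α z τ = 0) ∧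
    (∃ τ : ℝ, areluSum α z τ = 1) ∧
    (∀ τ₁ τ₂ : ℝ, areluSum α z τ₁ = 1 → areluSum α z τ₂ = 1 → τ₁ = τ₂) := by
  have hα1 : (0:ℝ) < α - 1 := by linarith
  have hp : (0:ℝ) < 1 / (α - 1) := by positivity
  have hcont : Continuous (areluSum α z) := by
    unfold areluSum
    exact continuous_finset_sum _ fun i _ =>
      (((continuous_const.sub continuous_id).max continuous_const).rpow_const
        fun x => Or.inr hp.le)
  have hanti : Antitone (areluSum α z) := by
    intro a b hab
    unfold areluSum
    apply Finset.sum_le_sum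
    intro i _
    apply Real.rpow_le_rpow (le_max_right _ _) _ hp.le
    exact max_le_max (by linarith) le_rfl
  have htop : Filter.Tendsto (areluSum α z) Filter.atBot Filter.atTop := by
    set i0 : Fin d := ⟨0, hd⟩
    have h0 : Filter.Tendsto (fun τ : ℝ => (α - 1) * z i0 - τ) Filter.atBot Filter.atTop := by
      apply Filter.tendsto_atTop_add_const_left
      exact Filter.tendsto_neg_atBot_atTop
    have h1 : Filter.Tendsto (fun τ : ℝ => (max ((α - 1) * z i0 - τ) 0) ^ (1 / (α - 1)))
        Filter.atBot Filter.atTop := by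
      apply (tendsto_rpow_atTop hp).comp
      exact Filter.tendsto_atTop_mono (fun τ => le_max_left _ _) h0
    apply Filter.tendsto_atTop_mono _ h1
    intro τ
    unfold areluSum
    exact Finset.single_le_sum
      (f := fun i => (max ((α - 1) * z i - τ) 0) ^ (1 / (α - 1)))
      (fun i _ => Real.rpow_nonneg (le_max_right _ _) _) (Finset.mem_univ i0)
  have hzero : ∀ τ : ℝ,
      (α - 1) * Finset.univ.sup' (Finset.univ_nonempty_iff.mpr
        (Fin.pos_iff_nonempty.mp hd)) z ≤ τ → areluSum α z τ = 0 := by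
    intro τ hτ
    unfold areluSum
    apply Finset.sum_eq_zero
    intro i _
    have hzi : (α - 1) * z i ≤ τ := le_trans
      (mul_le_mul_of_nonneg_left (Finset.le_sup' z (Finset.mem_univ i)) hα1.le) hτ
    rw [max_eq_right (by linarith), Real.zero_rpow hp.ne']
  have hstrict : ∀ τ₁ τ₂ : ℝ, τ₁ < τ₂ → 0 < areluSum α z τ₂ →
      areluSum α z τ₂ < areluSum α z τ₁ := by
    intro τ₁ τ₂ hlt hpos
    have : ∃ i ∈ Finset.univ, (0:ℝ) <
        (max ((α - 1) * z i - τ₂) 0) ^ (1 / (α - 1)) := by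
      by_contra h
      push_neg at h
      have : areluSum α z τ₂ ≤ 0 := Finset.sum_nonpos fun i hi => h i hi
      linarith
    obtain ⟨i, _, hi⟩ := this
    have hm : 0 < (α - 1) * z i - τ₂ := by
      by_contra hm
      push_neg at hm
      rw [max_eq_right hm, Real.zero_rpow hp.ne'] at hi
      exact lt_irrefl _ hi
    unfold areluSum
    apply Finset.sum_lt_sum
    · intro j _
      apply Real.rpow_le_rpow (le_max_right _ _) _ hp.le
      exact max_le_max (by linarith) le_rfl
    · refine ⟨i, Finset.mem_univ i, ?_⟩
      apply Real.rpow_lt_rpow (le_max_right _ _) _ hp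
      calc max ((α - 1) * z i - τ₂) 0 = (α - 1) * z i - τ₂ := max_eq_left hm.le
        _ < (α - 1) * z i - τ₁ := by linarith
        _ ≤ max ((α - 1) * z i - τ₁) 0 := le_max_left _ _
  have hex : ∃ τ : ℝ, areluSum α z τ = 1 := by
    set T := (α - 1) * Finset.univ.sup' (Finset.univ_nonempty_iff.mpr
        (Fin.pos_iff_nonempty.mp hd)) z with hT
    have hfT : areluSum α z T = 0 := hzero T le_rfl
    have hev : ∀ᶠ τ in Filter.atBot, (1:ℝ) ≤ areluSum α z τ :=
      htop.eventually_ge_atTop 1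
    obtain ⟨b, hb⟩ := Filter.eventually_atBot.mp hev
    set a := min b T
    have hfa : (1:ℝ) ≤ areluSum α z a := hb a (min_le_left _ _)
    have := intermediate_value_Icc' (min_le_right b T) hcont.continuousOn
    have h1mem : (1:ℝ) ∈ Set.Icc (areluSum α z T) (areluSum α z a) := by
      rw [hfT]; exact ⟨by norm_num, hfa⟩
    obtain ⟨τ, _, hτ⟩ := this h1mem
    exact ⟨τ, hτ⟩
  refine ⟨hcont, hanti, htop, hzero, hex, ?_⟩
  intro τ₁ τ₂ h1 h2
  by_contra hne
  rcases lt_or_gt_of_ne hne with h | h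
  · have := hstrict τ₁ τ₂ h (by rw [h2]; norm_num)
    rw [h1, h2] at this; exact lt_irrefl _ this
  · have := hstrict τ₂ τ₁ h (by rw [h1]; norm_num)
    rw [h1, h2] at this; exact lt_irrefl _ this
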